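/- arXiv:2405.19067 — 6 statements merged into one kernel-verified Lean document; each statement's English description precedes it below -/
import Mathlib

section
/- Every unitary n×n matrix V can be decomposed as V = O₁ Φ O₂, where O₁ and O₂ are real orthogonal matrices and Φ is a diagonal matrix whose diagonal entries are complex numbers of modulus 1. -/
/-!
`S = V Vᵀ` is symmetric and unitary, so `S S̄ = S S* = 1`; the imaginary part of this identity
says that the real symmetric matrices `Re S` and `Im S` commute. Diagonalizing them simultaneously
by one real orthogonal `O₁` gives `S = O₁ Z O₁ᵀ` with `Z` diagonal unitary. If `Φ` is a diagonal
unitary square root of `Z`, then `P = O₁ Φ` satisfies `P Pᵀ = V Vᵀ`, so `W = P* V` is unitary with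
`W Wᵀ = 1`. Then `W̄ = (W*)ᵀ = W`, i.e. `W` is a real orthogonal matrix `O₂`, and `V = O₁ Φ O₂`.
-/

open Matrix Complex Module.End

theorem LinearMap.IsSymmetric.exists_orthonormalBasis_eigenvectors_of_commute
    {𝕜 E ι : Type*} [RCLike 𝕜] [NormedAddCommGroup E] [InnerProductSpace 𝕜 E]
    [FiniteDimensional 𝕜 E] [Fintype ι] (hι : Module.finrank 𝕜 E = Fintype.card ι)
    {A B : E →ₗ[𝕜] E} (hA : A.IsSymmetric) (hB : B.IsSymmetric) (hAB : Commute A B) :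
    ∃ (b : OrthonormalBasis ι 𝕜 E) (α β : ι → 𝕜),
      ∀ j, A (b j) = α j • b j ∧ B (b j) = β j • b j := by
  classical
  have hV := hA.directSum_isInternal_of_commute hB hAB
  have := hV.submodule_iSupIndep.fintypeNeBotOfFiniteDimensional
  have hV' := DirectSum.isInternal_ne_bot_iff.mpr hV
  have hfam := (hA.orthogonalFamily_eigenspace_inf_eigenspace hB).comp
    (Subtype.val_injective (p := fun μ ↦ eigenspace A μ.2 ⊓ eigenspace B μ.1 ≠ ⊥))
  let e := Fintype.equivFin ι
  let μ j := (hV'.subordinateOrthonormalBasisIndex hι (e j) hfam).val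
  refine ⟨(hV'.subordinateOrthonormalBasis hι hfam).reindex e.symm,
    fun j ↦ (μ j).2, fun j ↦ (μ j).1, fun j ↦ ?_⟩
  obtain ⟨hAj, hBj⟩ := hV'.subordinateOrthonormalBasis_subordinate hι (e j) hfam
  simpa only [OrthonormalBasis.reindex_apply, Equiv.symm_symm] using
    And.intro (mem_eigenspace_iff.mp hAj) (mem_eigenspace_iff.mp hBj)

theorem Complex.exists_exp_I_mul_sq_eq {z : ℂ} (hz : ‖z‖ = 1) :
    ∃ θ : ℝ, exp (I * θ) ^ 2 = z := by
  refine ⟨arg z / 2, ?_⟩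
  conv_rhs => rw [← norm_mul_exp_arg_mul_I z, hz]
  rw [← exp_nat_mul, ofReal_one, one_mul]
  congr 1
  push_cast
  ring

namespace Matrix

variable {𝕜 ι : Type*} [RCLike 𝕜] [Fintype ι] [DecidableEq ι]

theorem eq_mul_diagonal_mul_star_of_mulVec_transpose_eq_smul {A U : Matrix ι ι 𝕜}
    (hU : U ∈ unitaryGroup ι 𝕜) {d : ι → 𝕜} (h : ∀ j, A *ᵥ Uᵀ j = d j • Uᵀ j) :
    A = U * diagonal d * star U := by
  have hAU : A * U = U * diagonal d := by
    ext i j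
    rw [mul_diagonal, mul_comm]
    simpa [mulVec, dotProduct, mul_apply] using congrFun (h j) i
  rw [← hAU, mul_assoc, hU.2, mul_one]

theorem IsHermitian.exists_unitary_diagonal_of_commute {A B : Matrix ι ι 𝕜}
    (hA : A.IsHermitian) (hB : B.IsHermitian) (hAB : Commute A B) :
    ∃ U ∈ unitaryGroup ι 𝕜, ∃ α β : ι → 𝕜,
      A = U * diagonal α * star U ∧ B = U * diagonal β * star U := by
  obtain ⟨b, α, β, hb⟩ :=
    (isSymmetric_toEuclideanLin_iff.mpr hA).exists_orthonormalBasis_eigenvectors_of_commute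
      finrank_euclideanSpace (isSymmetric_toEuclideanLin_iff.mpr hB)
      (hAB.map (toLpLinAlgEquiv 2))
  have hU := (EuclideanSpace.basisFun ι 𝕜).toMatrix_orthonormalBasis_mem_unitary b
  exact ⟨_, hU, α, β,
    eq_mul_diagonal_mul_star_of_mulVec_transpose_eq_smul hU fun j ↦ congrArg WithLp.ofLp (hb j).1,
    eq_mul_diagonal_mul_star_of_mulVec_transpose_eq_smul hU fun j ↦ congrArg WithLp.ofLp (hb j).2⟩

theorem diagonal_mem_unitaryGroup_iff {d : ι → 𝕜} :
    diagonal d ∈ unitaryGroup ι 𝕜 ↔ ∀ j, ‖d j‖ = 1 := by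
  rw [mem_unitaryGroup_iff, star_eq_conjTranspose, diagonal_conjTranspose, diagonal_mul_diagonal,
    ← diagonal_one, diagonal_eq_diagonal_iff]
  simp only [Pi.star_apply, RCLike.star_def, RCLike.mul_conj]
  norm_cast
  exact forall_congr' fun j ↦ pow_eq_one_iff_of_nonneg (norm_nonneg _) two_ne_zero

theorem mapMatrix_ofRealHom_mem_unitaryGroup {O : Matrix ι ι ℝ} (hO : O ∈ orthogonalGroup ι ℝ) :
    ofRealHom.mapMatrix O ∈ unitaryGroup ι ℂ := by
  have hstar : star (ofRealHom.mapMatrix O) = ofRealHom.mapMatrix (star O) := by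
    ext; simp
  rw [mem_unitaryGroup_iff, hstar, ← map_mul, hO.2, map_one]

theorem exists_eq_mapMatrix_ofRealHom_of_mul_transpose_eq_one {W : Matrix ι ι ℂ}
    (hW : W ∈ unitaryGroup ι ℂ) (hWT : W * Wᵀ = 1) :
    ∃ O ∈ orthogonalGroup ι ℝ, W = ofRealHom.mapMatrix O := by
  have hstar : star W = Wᵀ := by
    rw [← mul_one (star W), ← hWT, ← mul_assoc, hW.1, one_mul]
  obtain ⟨O, rfl⟩ : ∃ O, W = ofRealHom.mapMatrix O :=
    ⟨W.map re, by ext i j; exact (conj_eq_iff_re.mp (congrFun (congrFun hstar j) i)).symm⟩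
  refine ⟨O, (mem_orthogonalGroup_iff _ _).mpr (map_injective ofReal_injective ?_), rfl⟩
  change ofRealHom.mapMatrix (O * Oᵀ) = ofRealHom.mapMatrix 1
  rwa [map_mul, map_one]

theorem commute_map_re_map_im_of_transpose_eq {S : Matrix ι ι ℂ} (hS : S ∈ unitaryGroup ι ℂ)
    (hST : Sᵀ = S) : Commute (S.map re) (S.map im) := by
  have hsymm : ∀ i j, S j i = S i j := fun i j ↦ congrFun (congrFun hST i) j
  ext i j
  have h := congrArg im (congrFun (congrFun hS.2 i) j)
  simp only [mul_apply, star_apply, RCLike.star_def, im_sum, mul_im, conj_re, conj_im,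
    one_apply, apply_ite im, one_im, zero_im, ite_self] at h
  simp only [mul_apply, map_apply]
  refine (sub_eq_zero.mp ?_).symm
  rw [← Finset.sum_sub_distrib, ← h]
  refine Finset.sum_congr rfl fun k _ ↦ ?_
  rw [hsymm j k]
  ring

theorem eq_mapMatrix_ofRealHom_re_add_I_smul_im (S : Matrix ι ι ℂ) :
    S = ofRealHom.mapMatrix (S.map re) + I • ofRealHom.mapMatrix (S.map im) := by
  ext i j
  simp [mul_comm I]

theorem exists_orthogonal_diagonal_of_transpose_eq {S : Matrix ι ι ℂ}
    (hS : S ∈ unitaryGroup ι ℂ) (hST : Sᵀ = S) :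
    ∃ O ∈ orthogonalGroup ι ℝ, ∃ z : ι → ℂ,
      (∀ j, ‖z j‖ = 1) ∧ S = ofRealHom.mapMatrix O * diagonal z * (ofRealHom.mapMatrix O)ᵀ := by
  have hHerm {f : ℂ → ℝ} : (S.map f).IsHermitian := by
    rw [IsHermitian, conjTranspose_eq_transpose_of_trivial, ← transpose_map, hST]
  obtain ⟨O, hO, α, β, hα, hβ⟩ := hHerm.exists_unitary_diagonal_of_commute hHerm
    (commute_map_re_map_im_of_transpose_eq hS hST)
  let Oc := ofRealHom.mapMatrix O
  let z j := (α j : ℂ) + I * β j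
  have hz : diagonal z =
      ofRealHom.mapMatrix (diagonal α) + I • ofRealHom.mapMatrix (diagonal β) := by
    rw [RingHom.mapMatrix_apply, RingHom.mapMatrix_apply, diagonal_map (map_zero _),
      diagonal_map (map_zero _), ← diagonal_smul, ← diagonal_add]
    rfl
  have hS_eq : S = Oc * diagonal z * Ocᵀ := by
    rw [eq_mapMatrix_ofRealHom_re_add_I_smul_im S, hα, hβ, hz]
    simp only [map_mul, mul_add, add_mul, mul_smul_comm, smul_mul_assoc]
    rfl
  have hOc : Ocᵀ * Oc = 1 := by
    rw [← map_one ofRealHom.mapMatrix, ← (mem_orthogonalGroup_iff' _ _).mp hO, map_mul]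
    rfl
  have hz_eq : diagonal z = Ocᵀ * S * Oc := by
    rw [hS_eq, ← mul_assoc, ← mul_assoc, hOc, one_mul, mul_assoc, hOc, mul_one]
  have hOc_mem := mapMatrix_ofRealHom_mem_unitaryGroup hO
  refine ⟨O, hO, z, diagonal_mem_unitaryGroup_iff.mp ?_, hS_eq⟩
  rw [hz_eq]
  exact mul_mem (mul_mem (transpose_mem_unitaryGroup_iff.mpr hOc_mem) hS) hOc_mem

theorem exists_orthogonal_eq_mul_of_mul_transpose_eq {V P : Matrix ι ι ℂ}
    (hV : V ∈ unitaryGroup ι ℂ) (hP : P ∈ unitaryGroup ι ℂ) (hVP : V * Vᵀ = P * Pᵀ) :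
    ∃ O ∈ orthogonalGroup ι ℝ, V = P * ofRealHom.mapMatrix O := by
  have hW : star P * V * (star P * V)ᵀ = 1 :=
    calc star P * V * (star P * V)ᵀ = star P * (V * Vᵀ) * (star P)ᵀ := by
          simp only [transpose_mul, mul_assoc]
      _ = (star P * P) * (star P * P)ᵀ := by simp only [hVP, transpose_mul, mul_assoc]
      _ = 1 := by rw [hP.1, transpose_one, one_mul]
  obtain ⟨O, hO, hO_eq⟩ :=
    exists_eq_mapMatrix_ofRealHom_of_mul_transpose_eq_one (mul_mem (Unitary.star_mem hP) hV) hW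
  exact ⟨O, hO, by rw [← hO_eq, ← mul_assoc, hP.2, one_mul]⟩

end Matrix

/-- Every unitary matrix `V` decomposes as `V = O₁ Φ O₂` with `O₁, O₂`
real orthogonal and `Φ` diagonal with unit-modulus entries `e^{iφ_j}`. -/
theorem unitary_decomposition {n : ℕ} (V : Matrix (Fin n) (Fin n) ℂ)
    (hV : V ∈ Matrix.unitaryGroup (Fin n) ℂ) :
    ∃ (O₁ O₂ : Matrix (Fin n) (Fin n) ℝ) (φ : Fin n → ℝ),
      O₁ ∈ Matrix.orthogonalGroup (Fin n) ℝ ∧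
      O₂ ∈ Matrix.orthogonalGroup (Fin n) ℝ ∧
      V = O₁.map (fun a => (a : ℂ)) *
          Matrix.diagonal (fun j => Complex.exp (Complex.I * φ j)) *
          O₂.map (fun a => (a : ℂ)) := by
  obtain ⟨O₁, hO₁, z, hz, hVV⟩ := exists_orthogonal_diagonal_of_transpose_eq
    (mul_mem hV (transpose_mem_unitaryGroup_iff.mpr hV))
    (by rw [transpose_mul, transpose_transpose])
  choose φ hφ using fun j ↦ exists_exp_I_mul_sq_eq (hz j)
  set Φ := diagonal fun j ↦ exp (I * φ j)
  have hΦ : Φ ∈ unitaryGroup (Fin n) ℂ :=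
    diagonal_mem_unitaryGroup_iff.mpr fun j ↦ norm_exp_I_mul_ofReal (φ j)
  have hΦΦ : Φ * Φᵀ = diagonal z := by
    rw [diagonal_transpose, diagonal_mul_diagonal]
    simp only [← sq, hφ]
  obtain ⟨O₂, hO₂, hV_eq⟩ := exists_orthogonal_eq_mul_of_mul_transpose_eq hV
    (mul_mem (mapMatrix_ofRealHom_mem_unitaryGroup hO₁) hΦ) (by
      rw [hVV, transpose_mul, ← hΦΦ]
      simp only [mul_assoc])
  exact ⟨O₁, O₂, φ, hO₁, hO₂, hV_eq⟩
end

section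
/- In the Weyl algebra with [x,p] = i, for all natural numbers M, N, the identity {x^M, p^N} = −(2i/((N+1)(M+1))) [x^{M+1}, p^{N+1}] − (1/(N+1)) Σ_{k=1}^{N−1} [p^{N−k}, [x^M, p^k]] holds. -/
/-!
Everything is expressed through `S = ∑_{j=0}^{N} p^j x^M p^(N-j)`. Expanding `[x^(M+1), p^(N+1)]`
by the Leibniz rule gives `(M+1) i S`, and each double commutator
`[p^(N-k), [x^M, p^k]] = p^(N-k) x^M p^k + p^k x^M p^(N-k) - {x^M, p^N}`, so the sum equals
`2 S - (N+1) {x^M, p^N}`; on the right-hand side the two multiples of `S` cancel.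
-/

open Finset

section Ring

variable {R : Type*} [Ring R]

theorem lie_pow_succ_right (a b : R) (n : ℕ) :
    ⁅a, b ^ (n + 1)⁆ = ∑ j ∈ range (n + 1), b ^ j * ⁅a, b⁆ * b ^ (n - j) := by
  induction n with
  | zero => simp
  | succ n ih =>
    have hsucc : ⁅a, b ^ (n + 2)⁆ = ⁅a, b ^ (n + 1)⁆ * b + b ^ (n + 1) * ⁅a, b⁆ := by
      simp only [Ring.lie_def, pow_succ b (n + 1)]
      noncomm_ring
    rw [hsucc, ih, sum_mul, sum_range_succ _ (n + 1), Nat.sub_self, pow_zero, mul_one]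
    congr 1
    refine sum_congr rfl fun j hj => ?_
    rw [mul_assoc, ← pow_succ, Nat.sub_add_comm (Nat.lt_succ_iff.mp (mem_range.mp hj))]

theorem sum_Ico_lie_pow_lie_pow (a b : R) (N : ℕ) :
    ∑ k ∈ Ico 1 N, ⁅b ^ (N - k), ⁅a, b ^ k⁆⁆
      = 2 • ∑ j ∈ range (N + 1), b ^ j * a * b ^ (N - j) - (N + 1) • (a * b ^ N + b ^ N * a) := by
  -- the terms `k = 0` and `k = N` vanish, so the sum may run over all of `range (N + 1)`
  have hrange : ∑ k ∈ Ico 1 N, ⁅b ^ (N - k), ⁅a, b ^ k⁆⁆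
      = ∑ k ∈ range (N + 1), ⁅b ^ (N - k), ⁅a, b ^ k⁆⁆ := by
    refine sum_subset (fun k hk => ?_) fun k hk hk' => ?_
    · simp only [mem_Ico, mem_range] at hk ⊢
      omega
    · simp only [mem_Ico, mem_range] at hk hk'
      obtain rfl | rfl : k = 0 ∨ k = N := by omega
      all_goals simp [Ring.lie_def]
  have hterm : ∀ k ∈ range (N + 1), ⁅b ^ (N - k), ⁅a, b ^ k⁆⁆
      = b ^ (N - k) * a * b ^ k + b ^ k * a * b ^ (N - k) - (a * b ^ N + b ^ N * a) := by
    intro k hk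
    have hkN := Nat.lt_succ_iff.mp (mem_range.mp hk)
    have hleft : b ^ (N - k) * b ^ k = b ^ N := by rw [← pow_add, Nat.sub_add_cancel hkN]
    have hright : b ^ k * b ^ (N - k) = b ^ N := by rw [← pow_add, Nat.add_sub_cancel' hkN]
    simp only [Ring.lie_def, mul_sub, sub_mul, ← mul_assoc, hleft]
    simp only [mul_assoc, hright]
    abel
  have hreflect : ∑ k ∈ range (N + 1), b ^ (N - k) * a * b ^ k
      = ∑ j ∈ range (N + 1), b ^ j * a * b ^ (N - j) := by
    rw [← sum_range_reflect]
    refine sum_congr rfl fun j hj => ?_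
    rw [Nat.add_sub_cancel, Nat.sub_sub_self (Nat.lt_succ_iff.mp (mem_range.mp hj))]
  rw [hrange, sum_congr rfl hterm, sum_sub_distrib, sum_add_distrib, hreflect, sum_const,
    card_range, two_smul]

end Ring

section Algebra

variable {K R : Type*} [CommSemiring K] [Ring R] [Algebra K R]

theorem lie_pow_succ_left_of_lie_eq_smul_one {x p : R} {c : K} (h : ⁅x, p⁆ = c • 1) (n : ℕ) :
    ⁅x ^ (n + 1), p⁆ = (((n : K) + 1) * c) • x ^ n := by
  induction n with
  | zero => simpa using h
  | succ n ih =>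
    have hsucc : ⁅x ^ (n + 2), p⁆ = x * ⁅x ^ (n + 1), p⁆ + ⁅x, p⁆ * x ^ (n + 1) := by
      simp only [Ring.lie_def, pow_succ' x (n + 1)]
      noncomm_ring
    rw [hsucc, ih, h, mul_smul_comm, smul_mul_assoc, one_mul, ← pow_succ', ← add_smul]
    push_cast
    ring_nf

theorem lie_pow_succ_pow_succ_of_lie_eq_smul_one {x p : R} {c : K} (h : ⁅x, p⁆ = c • 1)
    (M N : ℕ) :
    ⁅x ^ (M + 1), p ^ (N + 1)⁆
      = (((M : K) + 1) * c) • ∑ j ∈ range (N + 1), p ^ j * x ^ M * p ^ (N - j) := by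
  simp only [lie_pow_succ_right, lie_pow_succ_left_of_lie_eq_smul_one h, mul_smul_comm,
    smul_mul_assoc, smul_sum]

end Algebra

/-- In the Weyl algebra with `[x,p] = i`,
`{x^M, p^N} = −(2i/((N+1)(M+1))) [x^{M+1}, p^{N+1}] − (1/(N+1)) ∑_{k=1}^{N−1} [p^{N−k}, [x^M, p^k]]`. -/
theorem weyl_anticommutator_identity {R : Type*} [Ring R] [Algebra ℂ R]
    (x p : R) (h : x * p - p * x = Complex.I • (1 : R)) (M N : ℕ) :
    x ^ M * p ^ N + p ^ N * x ^ M =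
      (-(2 * Complex.I) / (((N : ℂ) + 1) * ((M : ℂ) + 1))) •
        (x ^ (M + 1) * p ^ (N + 1) - p ^ (N + 1) * x ^ (M + 1))
      - ((1 : ℂ) / ((N : ℂ) + 1)) •
        ∑ k ∈ Finset.Ico 1 N,
          (p ^ (N - k) * (x ^ M * p ^ k - p ^ k * x ^ M)
            - (x ^ M * p ^ k - p ^ k * x ^ M) * p ^ (N - k)) := by
  simp only [← Ring.lie_def] at h ⊢
  rw [lie_pow_succ_pow_succ_of_lie_eq_smul_one h, sum_Ico_lie_pow_lie_pow]
  have hM : (M : ℂ) + 1 ≠ 0 := Nat.cast_add_one_ne_zero M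
  have hN : (N : ℂ) + 1 ≠ 0 := Nat.cast_add_one_ne_zero N
  match_scalars <;> field_simp
  linear_combination 2 * Complex.I_sq
end

section
/- Let A be the symmetric k-tensor with Ax^{⊗k} = ∏_{i=1}^{l} x_i^{n_i} (a monomial in l variables with n₁+⋯+n_l = k), and let 0 ≤ j < k. Then for the parameter family s ↦ A s^{⊗j} (a (k−j)-tensor depending on the parameter s with all coordinates s_i > 0), arank(A s^{⊗j}) ≤ l. -/
open Finset

section Aux

variable {k l : ℕ}

/-- exponent count of a function -/
private noncomputable def cnt (f : Fin k → Fin l) : Fin l →₀ ℕ := ∑ a, Finsupp.single (f a) 1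

private lemma cnt_apply (f : Fin k → Fin l) (b : Fin l) :
    cnt f b = (Finset.univ.filter (fun a => f a = b)).card := by
  classical
  rw [Finset.card_filter, cnt]
  rw [show ((∑ a, Finsupp.single (f a) 1 : Fin l →₀ ℕ)) b
      = ∑ a, (Finsupp.single (f a) 1 : Fin l →₀ ℕ) b by
    rw [Finsupp.coe_finset_sum, Finset.sum_apply]]
  exact Finset.sum_congr rfl fun a _ => by simp [Finsupp.single_apply]

/-- two functions with the same fiber counts differ by a permutation -/
private lemma exists_comp_perm (f g : Fin k → Fin l) (h : cnt f = cnt g) :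
    ∃ σ : Equiv.Perm (Fin k), f ∘ σ = g := by
  classical
  have hcard : ∀ b, Fintype.card {a // f a = b} = Fintype.card {a // g a = b} := by
    intro b
    have := congrFun (congrArg (fun (p : Fin l →₀ ℕ) => (p : Fin l → ℕ)) h) b
    simp only [cnt_apply] at *
    rw [Fintype.card_subtype, Fintype.card_subtype]
    simpa [cnt_apply] using this
  let e : Fin k ≃ Fin k :=
    (Equiv.sigmaFiberEquiv g).symm.trans
      ((Equiv.sigmaCongrRight (fun b => (Fintype.equivOfCardEq (hcard b).symm))).trans
        (Equiv.sigmaFiberEquiv f))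
  refine ⟨e, ?_⟩
  funext a
  show f (e a) = g a
  have : ∀ (x : Σ b, {a // g a = b}),
      f ((Equiv.sigmaFiberEquiv f) ((Equiv.sigmaCongrRight
        (fun b => (Fintype.equivOfCardEq (hcard b).symm))) x)) = x.1 := by
    rintro ⟨b, a'⟩
    exact ((Fintype.equivOfCardEq (hcard b).symm) a').2
  have h2 := this ((Equiv.sigmaFiberEquiv g).symm a)
  simpa [e] using h2

/-- extracting class sums from a vanishing polynomial identity -/
private lemma class_sum_zero (c : (Fin k → Fin l) → ℝ)
    (h : ∀ x : Fin l → ℝ, ∑ f : Fin k → Fin l, (∏ a, x (f a)) * c f = 0)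
    (f₀ : Fin k → Fin l) :
    ∑ f ∈ Finset.univ.filter (fun f => cnt f = cnt f₀), c f = 0 := by
  classical
  set P : MvPolynomial (Fin l) ℝ :=
    ∑ f : Fin k → Fin l, MvPolynomial.C (c f) * MvPolynomial.monomial (cnt f) 1 with hPdef
  have hmon : ∀ f : Fin k → Fin l,
      (MvPolynomial.monomial (cnt f) (1 : ℝ)) = ∏ a, MvPolynomial.X (f a) := by
    intro f
    rw [cnt, MvPolynomial.monomial_sum_one]
    refine Finset.prod_congr rfl fun a _ => ?_
    rw [← MvPolynomial.X_pow_eq_monomial, pow_one]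
  have hP0 : P = 0 := by
    apply MvPolynomial.funext
    intro x
    simp only [hPdef, map_sum, MvPolynomial.eval_mul, MvPolynomial.eval_C, map_zero]
    rw [← h x]
    refine Finset.sum_congr rfl fun f _ => ?_
    rw [hmon]
    simp [mul_comm]
  have hco := congrArg (MvPolynomial.coeff (cnt f₀)) hP0
  simp only [hPdef, MvPolynomial.coeff_sum, MvPolynomial.coeff_zero,
    MvPolynomial.coeff_C_mul, MvPolynomial.coeff_monomial] at hco
  have hsame : (∑ f : Fin k → Fin l, if cnt f = cnt f₀ then c f else 0)
      = ∑ f : Fin k → Fin l, c f * if cnt f = cnt f₀ then 1 else 0 := by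
    refine Finset.sum_congr rfl fun f _ => ?_
    by_cases hf : cnt f = cnt f₀ <;> simp [hf]
  rw [Finset.sum_filter, hsame, hco]

private lemma expand_basis (M : MultilinearMap ℝ (fun _ : Fin k => (Fin l → ℝ)) ℝ)
    (v : Fin k → Fin l → ℝ) :
    M v = ∑ f : Fin k → Fin l,
      (∏ a, v a (f a)) * M (fun a => Pi.single (f a) 1) := by
  classical
  have h1 : v = fun a => ∑ i : Fin l, v a i • (Pi.single i (1:ℝ) : Fin l → ℝ) := by
    funext a i
    simp [Pi.single_apply, Finset.sum_apply]
  calc M v = M (fun a => ∑ i : Fin l, v a i • (Pi.single i (1:ℝ) : Fin l → ℝ)) := by rw [← h1]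
    _ = ∑ f : Fin k → Fin l, M (fun a => v a (f a) • (Pi.single (f a) (1:ℝ) : Fin l → ℝ)) :=
        M.map_sum (fun a i => v a i • (Pi.single i (1:ℝ) : Fin l → ℝ))
    _ = _ := by
        refine Finset.sum_congr rfl fun f _ => ?_
        rw [M.map_smul_univ]
        simp

/-- a symmetric multilinear map with vanishing diagonal vanishes -/
private lemma eq_zero_of_symm_of_diag_zero
    (M : MultilinearMap ℝ (fun _ : Fin k => (Fin l → ℝ)) ℝ)
    (hs : ∀ (σ : Equiv.Perm (Fin k)) (v : Fin k → Fin l → ℝ), M (v ∘ σ) = M v)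
    (hd : ∀ x : Fin l → ℝ, M (fun _ => x) = 0) (v : Fin k → Fin l → ℝ) : M v = 0 := by
  classical
  have hbasis : ∀ f₀ : Fin k → Fin l, M (fun a => Pi.single (f₀ a) 1) = 0 := by
    intro f₀
    have hcls := class_sum_zero (fun f => M (fun a => Pi.single (f a) 1)) ?_ f₀
    · have hconst : ∀ f ∈ Finset.univ.filter (fun f => cnt f = cnt f₀),
          M (fun a => Pi.single (f a) 1) = M (fun a => Pi.single (f₀ a) 1) := by
        intro f hf
        simp only [Finset.mem_filter] at hf
        obtain ⟨σ, hσ⟩ := exists_comp_perm f₀ f hf.2.symm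
        have : (fun a => Pi.single (f a) (1:ℝ)) = (fun a => Pi.single (f₀ a) 1) ∘ σ := by
          funext a
          simp [← congrFun hσ a, Function.comp]
        rw [this, hs]
      rw [Finset.sum_congr rfl hconst, Finset.sum_const] at hcls
      have hpos : 0 < (Finset.univ.filter (fun f => cnt f = cnt f₀)).card :=
        Finset.card_pos.mpr ⟨f₀, by simp⟩
      exact (smul_eq_zero.mp hcls).resolve_left hpos.ne'
    · intro x
      have := expand_basis M (fun _ => x)
      rw [hd] at this
      exact this.symm
  rw [expand_basis]
  simp [hbasis]

/-- the scaling identity for the monomial tensor -/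
private lemma scale_identity (nexp : Fin l → ℕ)
    (A : MultilinearMap ℝ (fun _ : Fin k => (Fin l → ℝ)) ℝ)
    (hsymm : ∀ (σ : Equiv.Perm (Fin k)) (v : Fin k → Fin l → ℝ), A (v ∘ σ) = A v)
    (hdiag : ∀ x : Fin l → ℝ, A (fun _ => x) = ∏ i, x i ^ nexp i)
    (t : Fin l → ℝ) (w : Fin k → Fin l → ℝ) :
    A (fun i => t * w i) = (∏ i, t i ^ nexp i) * A w := by
  classical
  let Lt : (Fin l → ℝ) →ₗ[ℝ] (Fin l → ℝ) :=
    { toFun := fun x => t * x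
      map_add' := fun x y => by funext i; simp [mul_add]
      map_smul' := fun c x => by funext i; simp; ring }
  let M : MultilinearMap ℝ (fun _ : Fin k => (Fin l → ℝ)) ℝ :=
    A.compLinearMap (fun _ => Lt) - (∏ i, t i ^ nexp i) • A
  have hz := eq_zero_of_symm_of_diag_zero M ?_ ?_ w
  · have : A (fun i => Lt (w i)) - (∏ i, t i ^ nexp i) * A w = 0 := by
      simpa [M, smul_eq_mul] using hz
    have h2 : A (fun i => Lt (w i)) = (∏ i, t i ^ nexp i) * A w := by linarith
    simpa [Lt] using h2
  · intro σ v
    simp only [M, MultilinearMap.sub_apply, MultilinearMap.smul_apply,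
      MultilinearMap.compLinearMap_apply]
    rw [show (fun i => Lt ((v ∘ σ) i)) = (fun i => Lt (v i)) ∘ σ from rfl, hsymm σ,
      hsymm σ]
  · intro x
    simp only [M, MultilinearMap.sub_apply, MultilinearMap.smul_apply,
      MultilinearMap.compLinearMap_apply]
    have : A (fun _ : Fin k => Lt x) = ∏ i, (t i * x i) ^ nexp i := by
      rw [show (fun _ : Fin k => Lt x) = (fun _ : Fin k => t * x) from rfl, hdiag]
      rfl
    rw [this, hdiag, smul_eq_mul, ← Finset.prod_mul_distrib]
    simp [mul_pow]

end Aux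

/-- The a-rank of a parameter-dependent `r`-tensor (as a family of multilinear maps):
the minimal `m` such that there is a fixed symmetric `r`-tensor `F` on `ℝ^m`
(independent of the parameter `s`) and matrices `K s` with `B s = F ∘ (K s)^{⊗r}`. -/
noncomputable def arank {S : Type*} (n r : ℕ)
    (B : S → MultilinearMap ℝ (fun _ : Fin r => (Fin n → ℝ)) ℝ) : ℕ∞ :=
  sInf {c : ℕ∞ | ∃ m : ℕ, c = (m : ℕ∞) ∧
    ∃ F : MultilinearMap ℝ (fun _ : Fin r => (Fin m → ℝ)) ℝ,
      (∀ (σ : Equiv.Perm (Fin r)) (v : Fin r → Fin m → ℝ), F (v ∘ σ) = F v) ∧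
      ∃ K : S → Matrix (Fin m) (Fin n) ℝ,
        ∀ s, B s = F.compLinearMap (fun _ => Matrix.mulVecLin (K s))}

/-- if `A` is the symmetric `k`-tensor whose diagonal is the monomial
`∏_{i=1}^{l} x_i^{n_i}` and `0 ≤ j < k`, then the parameter family
`s ↦ A s^{⊗j}` (partial contraction, with parameters `s` having all positive
coordinates) has a-rank at most `l`. -/
theorem arank_monomial_contraction_le (l k j : ℕ) (hj : j < k)
    (nexp : Fin l → ℕ) (hsum : ∑ i, nexp i = k)
    (A : MultilinearMap ℝ (fun _ : Fin k => (Fin l → ℝ)) ℝ)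
    (hsymm : ∀ (σ : Equiv.Perm (Fin k)) (v : Fin k → Fin l → ℝ), A (v ∘ σ) = A v)
    (hdiag : ∀ x : Fin l → ℝ, A (fun _ => x) = ∏ i, x i ^ nexp i)
    (B : {s : Fin l → ℝ // ∀ i, 0 < s i} →
      MultilinearMap ℝ (fun _ : Fin (k - j) => (Fin l → ℝ)) ℝ)
    (hB : ∀ (s : {s : Fin l → ℝ // ∀ i, 0 < s i}) (v : Fin (k - j) → Fin l → ℝ),
      B s v = A (fun i : Fin k =>
        if h : (i : ℕ) < j then s.val
        else v ⟨(i : ℕ) - j, by have := i.isLt; omega⟩)) :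
    arank l (k - j) B ≤ (l : ℕ∞) := by
  classical
  have hk : ∀ i : Fin k, ¬ (i:ℕ) < j → (i:ℕ) - j < k - j := fun i h => by
    have := i.isLt; omega
  -- extension of a (k-j)-tuple by the all-ones vector in the first j slots
  let ext : (Fin (k-j) → Fin l → ℝ) → (Fin k → Fin l → ℝ) :=
    fun w i => if h : (i:ℕ) < j then (fun _ => 1) else w ⟨(i:ℕ) - j, hk i h⟩
  have hext_update : ∀ (inst : DecidableEq (Fin (k-j))) (w : Fin (k-j) → Fin l → ℝ)
      (a : Fin (k-j)) (x : Fin l → ℝ),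
      ext (@Function.update _ _ inst w a x) =
        Function.update (ext w) ⟨j + a, by have := a.isLt; omega⟩ x := by
    intro inst w a x
    funext i
    by_cases hia : i = (⟨j + a, by have := a.isLt; omega⟩ : Fin k)
    · subst hia
      have h1 : ¬ ((j + a : ℕ) < j) := by omega
      simp only [ext, dif_neg h1, Function.update_self]
      have key : ∀ (b : Fin (k-j)), b = a → @Function.update _ _ inst w a x b = x := by
        intro b hb; subst hb; simp
      exact key _ (Fin.ext (by simp))
    · rw [Function.update_of_ne hia]
      by_cases h : (i:ℕ) < j
      · simp only [ext, dif_pos h]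
      · have hne : (⟨(i:ℕ) - j, hk i h⟩ : Fin (k-j)) ≠ a := by
          intro e
          apply hia
          have := congrArg Fin.val e
          simp at this
          apply Fin.ext
          simp
          omega
        simp only [ext, dif_neg h, Function.update_of_ne hne]
  -- the fixed symmetric tensor F
  let F : MultilinearMap ℝ (fun _ : Fin (k-j) => (Fin l → ℝ)) ℝ :=
    { toFun := fun w => A (ext w)
      map_update_add' := by
        intro inst w a x y
        show A (ext (Function.update w a (x + y)))
          = A (ext (Function.update w a x)) + A (ext (Function.update w a y))
        rw [hext_update inst, hext_update inst, hext_update inst]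
        exact A.map_update_add _ _ _ _
      map_update_smul' := by
        intro inst w a c x
        show A (ext (Function.update w a (c • x))) = c • A (ext (Function.update w a x))
        rw [hext_update inst, hext_update inst]
        exact A.map_update_smul _ _ _ _ }
  have hFapply : ∀ w, F w = A (ext w) := fun _ => rfl
  -- symmetry of F
  have hFsymm : ∀ (σ : Equiv.Perm (Fin (k-j))) (w : Fin (k-j) → Fin l → ℝ),
      F (w ∘ σ) = F w := by
    intro σ w
    let emb : Fin (k-j) ≃ {i : Fin k // j ≤ (i:ℕ)} :=
      { toFun := fun a => ⟨⟨j + a, by have := a.isLt; omega⟩, by simp⟩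
        invFun := fun i => ⟨(i.1:ℕ) - j, by have := i.1.isLt; have := i.2; omega⟩
        left_inv := fun a => by apply Fin.ext; simp
        right_inv := fun i => by
          apply Subtype.ext; apply Fin.ext
          have := i.2
          simp
          omega }
    let pσ : Equiv.Perm (Fin k) := σ.extendDomain emb
    have hcomp : ext (w ∘ σ) = (ext w) ∘ pσ := by
      funext i
      by_cases h : (i:ℕ) < j
      · have hnp : ¬ (j ≤ (i:ℕ)) := by omega
        have hfix : pσ i = i := Equiv.Perm.extendDomain_apply_not_subtype σ emb hnp
        simp only [Function.comp_apply, hfix, ext, dif_pos h]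
      · have hp : j ≤ (i:ℕ) := by omega
        have happ : pσ i = (emb (σ (emb.symm ⟨i, hp⟩)) : {i : Fin k // j ≤ (i:ℕ)}).1 :=
          Equiv.Perm.extendDomain_apply_subtype σ emb hp
        have hval : ((emb (σ (emb.symm ⟨i, hp⟩))).1 : ℕ) = j + (σ (emb.symm ⟨i, hp⟩) : ℕ) :=
          rfl
        have hnl : ¬ ((pσ i : ℕ) < j) := by rw [happ, hval]; omega
        simp only [Function.comp_apply, ext, dif_neg h, dif_neg hnl]
        have hidx : (⟨((pσ i : Fin k) : ℕ) - j, hk _ hnl⟩ : Fin (k-j))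
            = σ (emb.symm ⟨i, hp⟩) := by
          apply Fin.ext
          simp only [happ, hval]
          omega
        rw [hidx]
        have : emb.symm ⟨i, hp⟩ = (⟨(i:ℕ) - j, hk i h⟩ : Fin (k-j)) := rfl
        rw [this]
    rw [hFapply, hFapply, hcomp, hsymm]
  -- the matrices
  rw [arank]
  apply sInf_le
  refine ⟨l, rfl, F, hFsymm, fun s =>
    Matrix.diagonal (fun i =>
      ((∏ i', s.val i' ^ nexp i') ^ ((k - j : ℕ) : ℝ)⁻¹) / s.val i), ?_⟩
  intro s
  apply MultilinearMap.ext
  intro v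
  set sv := s.val with hsv
  have hspos : ∀ i, 0 < sv i := s.prop
  set P := ∏ i', sv i' ^ nexp i' with hPdef
  have hP : 0 < P := Finset.prod_pos fun i _ => pow_pos (hspos i) _
  set q := P ^ (((k - j : ℕ) : ℝ))⁻¹ with hqdef
  have hq : 0 < q := Real.rpow_pos_of_pos hP _
  have hqk : q ^ (k - j) = P := Real.rpow_inv_natCast_pow hP.le (by omega)
  -- compute both sides
  rw [hB s v]
  set W : Fin k → Fin l → ℝ := fun i =>
    if h : (i : ℕ) < j then sv else v ⟨(i : ℕ) - j, by have := i.isLt; omega⟩ with hWdef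
  show A W = F.compLinearMap (fun _ => Matrix.mulVecLin
    (Matrix.diagonal (fun i => q / sv i))) v
  rw [MultilinearMap.compLinearMap_apply]
  have hmv : ∀ a, (Matrix.diagonal (fun i => q / sv i)).mulVecLin (v a)
      = (fun i => q / sv i) * v a := by
    intro a
    funext i
    simp [Matrix.mulVecLin_apply, Matrix.mulVec_diagonal]
  rw [hFapply]
  have hclaim : ext (fun a => (Matrix.diagonal (fun i => q / sv i)).mulVecLin (v a)) =
      fun (i : Fin k) => (if (i:ℕ) < j then (1:ℝ) else q) • (sv⁻¹ * W i) := by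
    funext i
    by_cases h : (i:ℕ) < j
    · simp only [ext, dif_pos h, if_pos h, hWdef, one_smul]
      funext i'
      simp [Pi.inv_apply, (hspos i').ne']
    · simp only [ext, dif_neg h, if_neg h, hWdef, hmv]
      funext i'
      simp [Pi.inv_apply, div_eq_mul_inv, smul_eq_mul]
      ring
  rw [hclaim, MultilinearMap.map_smul_univ, scale_identity nexp A hsymm hdiag]
  have hprodinv : (∏ i, (sv⁻¹) i ^ nexp i) = P⁻¹ := by
    rw [hPdef, ← Finset.prod_inv_distrib]
    refine Finset.prod_congr rfl fun i _ => ?_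
    simp [Pi.inv_apply, inv_pow]
  have hprodq : (∏ i : Fin k, if (i:ℕ) < j then (1:ℝ) else q) = q ^ (k - j) := by
    rw [Fin.prod_univ_eq_prod_range (fun m => if m < j then (1:ℝ) else q)]
    rw [Finset.prod_ite]
    simp only [Finset.prod_const_one, Finset.prod_const, one_mul]
    have hfilter : (Finset.range k).filter (fun m => ¬ m < j) = Finset.Ico j k := by
      ext m
      simp only [Finset.mem_filter, Finset.mem_range, Finset.mem_Ico]
      omega
    rw [hfilter, Nat.card_Ico]
  rw [hprodinv, hprodq, smul_eq_mul, hqk]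
  field_simp
end

section
/- The Waring rank of the monomial x₁x₂⋯x_N (the C^N Z gate Hamiltonian) equals 2^{N−1}: x₁⋯x_N can be written as a linear combination of N-th powers of 2^{N−1} linear forms (1/(2^{N−1} N!)) Σ_{ε ∈ {±1}^{N−1}} (∏ε_j)(x₁ + ε₁x₂ + ⋯ + ε_{N−1}x_N)^N, and no decomposition with fewer powers exists. -/
/-!
For the identity, the coefficient of `x^α` in `∑_ε (∏ ε_j) (x₀ + ∑ ε_j x_{j+1})^N` is
`multinomial α · ∏_j ∑_{±} (±1)^(α_{j+1}+1)`, which vanishes unless every `α_{j+1}` is odd;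
with `|α| = N` this forces `α = (1, …, 1)`.

For the lower bound, comparing coefficients in `x₀⋯xₙ = ∑ cᵢ ℓᵢ^N` shows that the functional
`p ↦ ∑ cᵢ p(Lᵢ)` sends a monomial `x^d` of degree `N` to `[d = 1] / N!`. If `r < 2^n`, a nonzero
multilinear `h(y) = ∑_S h_S y^S` vanishes at the `r` affine points `(L_{i,k+1} / L_{i,0})_k`.
For `T` of maximal size with `h_T ≠ 0`, the form `∑_S h_S x₀^(|T|+1-|S|) x^S x^(Tᶜ)` of degree `N`
vanishes at every `Lᵢ` (it is `x₀^(|T|+1) x^(Tᶜ) h(x / x₀)`, and divisible by `x₀`), while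
its only squarefree monomial is the one with `S = T`. The functional then gives `h_T / N! = 0`.
-/

open MvPolynomial Finset
open scoped Nat

namespace MvPolynomial

theorem coeff_prod_X {R σ : Type*} [CommSemiring R] [Fintype σ] (s : σ →₀ ℕ) :
    coeff s (∏ i, X i : MvPolynomial σ R) = if ⇑s = 1 then 1 else 0 := by
  classical
  have := coeff_prod_X_pow (R := R) s 1 univ
  simp only [Pi.one_apply, pow_one] at this
  rw [this]
  congr 1
  simp [Finsupp.ext_iff, _root_.funext_iff]

theorem coeff_sum_C_mul_X_pow {R σ : Type*} [CommSemiring R] [Fintype σ] (a : σ → R)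
    (s : σ →₀ ℕ) (n : ℕ) :
    coeff s ((∑ i, C (a i) * X i : MvPolynomial σ R) ^ n) =
      if ∑ i, s i = n then Nat.multinomial univ s * ∏ i, a i ^ s i else 0 := by
  simp_rw [← smul_eq_C_mul, coeff_linearCombination_X_pow_of_fintype]
  rw [Finsupp.sum_fintype _ _ fun _ => rfl, Finsupp.prod_fintype _ _ fun _ => pow_zero _,
    Finsupp.multinomial_eq_of_support_subset (subset_univ _)]

end MvPolynomial

theorem Nat.multinomial_univ_one {σ : Type*} [Fintype σ] :
    Nat.multinomial univ (1 : σ → ℕ) = (Fintype.card σ)! := by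
  simpa using Nat.multinomial_spec (univ : Finset σ) 1

theorem eq_one_of_sum_eq_of_odd {n : ℕ} {s : Fin (n + 1) → ℕ} (hsum : ∑ k, s k = n + 1)
    (hodd : ∀ j : Fin n, Odd (s j.succ)) : s = 1 := by
  rw [Fin.sum_univ_succ] at hsum
  have hpos : ∀ j : Fin n, 1 ≤ s j.succ := fun j => (hodd j).pos
  have hparity : Even (∑ j : Fin n, (s j.succ - 1)) :=
    even_sum _ fun j _ => (hodd j).tsub_odd odd_one
  have hsub : ∑ j : Fin n, (s j.succ - 1) + n = ∑ j : Fin n, s j.succ := by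
    have : ∑ j : Fin n, (s j.succ - 1 + 1) = ∑ j : Fin n, s j.succ :=
      sum_congr rfl fun j _ => Nat.sub_add_cancel (hpos j)
    simpa [sum_add_distrib] using this
  obtain ⟨t, ht⟩ := hparity
  have hzero : ∑ j : Fin n, (s j.succ - 1) = 0 := by omega
  have htail : ∀ j : Fin n, s j.succ = 1 := fun j => by
    have := (sum_eq_zero_iff.1 hzero) j (mem_univ j)
    have := hpos j
    omega
  funext k
  induction k using Fin.cases with
  | zero => simp [htail] at hsum; simp; omega
  | succ j => exact htail j

section

variable {R : Type*} [CommRing R]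

theorem sum_bool_sign_pow (m : ℕ) :
    ∑ b : Bool, (if b then (1 : R) else -1) ^ (m + 1) = if Odd m then 2 else 0 := by
  rcases Nat.even_or_odd m with hm | hm
  · simp [hm.add_one.neg_one_pow, Nat.not_odd_iff_even.2 hm]
  · simp [hm.add_one.neg_one_pow, hm]

theorem sum_prod_sign_mul_pow_eq_C_mul_prod_X (n : ℕ) :
    ∑ ε : Fin n → Bool,
        C (∏ j, if ε j then (1 : R) else -1) *
          (X 0 + ∑ j, C (if ε j then (1 : R) else -1) * X j.succ) ^ (n + 1) =
      C (2 ^ n * (n + 1)! : R) * ∏ i, X i := by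
  set e : (Fin n → Bool) → Fin (n + 1) → R := fun ε => Fin.cons 1 fun j => if ε j then 1 else -1
  have hform : ∀ ε : Fin n → Bool, X 0 + ∑ j, C (if ε j then (1 : R) else -1) * X j.succ =
      ∑ k, C (e ε k) * X k := fun ε => by simp [Fin.sum_univ_succ, e]
  ext s
  simp only [hform, coeff_sum, coeff_C_mul, coeff_sum_C_mul_X_pow, coeff_prod_X]
  by_cases hdeg : ∑ k, s k = n + 1
  · have hterm : ∀ ε : Fin n → Bool, (∏ j, if ε j then (1 : R) else -1) * ∏ k, e ε k ^ s k =
        ∏ j, (if ε j then (1 : R) else -1) ^ (s j.succ + 1) := fun ε => by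
      rw [Fin.prod_univ_succ]
      simp only [e, Fin.cons_zero, Fin.cons_succ, one_pow, one_mul, ← prod_mul_distrib]
      exact prod_congr rfl fun j _ => (pow_succ' _ _).symm
    have hsigns : ∑ ε : Fin n → Bool, ∏ j, (if ε j then (1 : R) else -1) ^ (s j.succ + 1) =
        ∏ j : Fin n, if Odd (s j.succ) then 2 else 0 := by
      simp_rw [← sum_bool_sign_pow, Fintype.prod_sum]
    simp only [if_pos hdeg, mul_left_comm _ (Nat.multinomial _ _ : R), hterm, ← mul_sum, hsigns]
    by_cases hs : ⇑s = 1
    · simp [hs, Nat.multinomial_univ_one, mul_comm]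
    · obtain ⟨j, hj⟩ : ∃ j : Fin n, ¬ Odd (s j.succ) := by
        by_contra! hodd
        exact hs (eq_one_of_sum_eq_of_odd hdeg hodd)
      rw [if_neg hs, prod_eq_zero (i := j) (mem_univ j) (if_neg hj), mul_zero, mul_zero]
  · have hs : ⇑s ≠ 1 := fun hs => hdeg (by simp [hs])
    simp [hdeg, hs]

end

theorem sum_mul_prod_pow_of_prod_X_eq {K σ ι : Type*} [Field K] [CharZero K] [Fintype σ]
    [Fintype ι] {N : ℕ} {c : ι → K} {L : ι → σ → K}
    (hf : (∏ k, X k : MvPolynomial σ K) = ∑ i, C (c i) * (∑ k, C (L i k) * X k) ^ N)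
    {d : σ → ℕ} (hd : ∑ k, d k = N) :
    ∑ i, c i * ∏ k, L i k ^ d k = if d = 1 then ((Fintype.card σ)! : K)⁻¹ else 0 := by
  have hcoeff := congrArg (coeff (Finsupp.equivFunOnFinite.symm d)) hf
  simp only [coeff_prod_X, coeff_sum, coeff_C_mul, coeff_sum_C_mul_X_pow,
    Finsupp.coe_equivFunOnFinite_symm, hd, if_true, mul_left_comm _ (Nat.multinomial _ _ : K),
    ← mul_sum] at hcoeff
  by_cases h1 : d = 1
  · subst h1
    simp only [if_true, Nat.multinomial_univ_one] at hcoeff ⊢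
    exact eq_inv_of_mul_eq_one_right hcoeff.symm
  · simp only [h1, if_false] at hcoeff ⊢
    exact (_root_.mul_eq_zero.1 hcoeff.symm).resolve_left
      (by exact_mod_cast (Nat.multinomial_pos _ _).ne')

theorem exists_ne_zero_sum_mul_prod_eq_zero {K ι α : Type*} [Field K] [Fintype ι] [Fintype α]
    (hcard : Fintype.card ι < 2 ^ Fintype.card α) (b : ι → α → K) :
    ∃ h : Finset α → K, h ≠ 0 ∧ ∀ i, ∑ S, h S * ∏ k ∈ S, b i k = 0 := by
  have hdep : ¬ LinearIndependent K fun (S : Finset α) i => ∏ k ∈ S, b i k := fun hli => by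
    have := hli.fintype_card_le_finrank
    simp only [Fintype.card_finset, Module.finrank_fintype_fun_eq_card] at this
    omega
  obtain ⟨h, hsum, S, hS⟩ := Fintype.not_linearIndependent_iff.1 hdep
  exact ⟨h, fun h0 => hS (congrFun h0 S), fun i => by simpa using congrFun hsum i⟩

def probeExponent {n : ℕ} (S T : Finset (Fin n)) : Fin (n + 1) → ℕ :=
  Fin.cons (T.card + 1 - S.card) fun k => (if k ∈ S then 1 else 0) + (if k ∉ T then 1 else 0)

theorem sum_probeExponent {n : ℕ} {S T : Finset (Fin n)} (hST : S.card ≤ T.card) :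
    ∑ k, probeExponent S T k = n + 1 := by
  have hT : T.card ≤ n := by simpa using card_le_univ T
  simp [probeExponent, Fin.sum_univ_succ, sum_add_distrib, sum_ite, filter_not, card_sdiff]
  omega

theorem probeExponent_eq_one_iff {n : ℕ} {S T : Finset (Fin n)} :
    probeExponent S T = 1 ↔ S = T := by
  constructor
  · intro h
    ext k
    have := congrFun h k.succ
    by_cases hS : k ∈ S <;> by_cases hT : k ∈ T <;> simp_all [probeExponent]
  · rintro rfl
    funext k
    induction k using Fin.cases with
    | zero => simp [probeExponent]
    | succ k => by_cases hk : k ∈ S <;> simp [probeExponent, hk]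

theorem prod_pow_probeExponent {K : Type*} [Field K] {n : ℕ} (x : Fin (n + 1) → K)
    {S T : Finset (Fin n)} (hST : S.card ≤ T.card) :
    ∏ k, x k ^ probeExponent S T k =
      x 0 ^ (T.card + 1) * (∏ k ∈ Tᶜ, x k.succ) * ∏ k ∈ S, x k.succ / x 0 := by
  have hpos : 0 < T.card + 1 - S.card := by omega
  simp only [probeExponent, ← mem_compl, Fin.prod_univ_succ, Fin.cons_zero, Fin.cons_succ, pow_add,
    pow_ite, pow_one, pow_zero, prod_mul_distrib, prod_ite_mem, univ_inter, prod_div_distrib,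
    prod_const]
  rcases eq_or_ne (x 0) 0 with h0 | h0
  · simp [h0, zero_pow hpos.ne']
  · rw [pow_sub₀ _ h0 (by omega)]
    field_simp
    ring

theorem two_pow_le_card_of_prod_X_eq {K ι : Type*} [Field K] [CharZero K] [Fintype ι] {n : ℕ}
    {c : ι → K} {L : ι → Fin (n + 1) → K}
    (hf : (∏ k, X k : MvPolynomial (Fin (n + 1)) K) =
      ∑ i, C (c i) * (∑ k, C (L i k) * X k) ^ (n + 1)) :
    2 ^ n ≤ Fintype.card ι := by
  classical
  by_contra! hcard
  obtain ⟨h, hh, hvanish⟩ := exists_ne_zero_sum_mul_prod_eq_zero (by simpa using hcard)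
    fun i (k : Fin n) => L i k.succ / L i 0
  obtain ⟨T, hT, hTmax⟩ := exists_max_image {S | h S ≠ 0} card <| by
    simpa [Finset.Nonempty, _root_.funext_iff] using hh
  replace hT : h T ≠ 0 := by simpa using hT
  have hle : ∀ S, h S ≠ 0 → S.card ≤ T.card := fun S hS => hTmax S (by simpa using hS)
  have hmoment : ∀ S, h S * ∑ i, c i * ∏ k, L i k ^ probeExponent S T k =
      if S = T then h T / (n + 1)! else 0 := fun S => by
    by_cases hS : h S = 0
    · rw [hS, zero_mul, if_neg (by rintro rfl; exact hT hS)]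
    · rw [sum_mul_prod_pow_of_prod_X_eq hf (sum_probeExponent (hle S hS))]
      obtain rfl | hST := eq_or_ne S T <;> simp [probeExponent_eq_one_iff, div_eq_mul_inv, *]
  have hpoint : ∀ i, ∑ S, h S * ∏ k, L i k ^ probeExponent S T k = 0 := fun i => by
    have hterm : ∀ S, h S * ∏ k, L i k ^ probeExponent S T k = L i 0 ^ (T.card + 1) *
        (∏ k ∈ Tᶜ, L i k.succ) * (h S * ∏ k ∈ S, L i k.succ / L i 0) := fun S => by
      by_cases hS : h S = 0
      · simp [hS]
      · rw [prod_pow_probeExponent _ (hle S hS)]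
        ring
    rw [sum_congr rfl fun S _ => hterm S, ← mul_sum, hvanish i, mul_zero]
  have : h T / (n + 1)! = 0 := calc
    h T / (n + 1)! = ∑ S, h S * ∑ i, c i * ∏ k, L i k ^ probeExponent S T k := by
      simp [hmoment]
    _ = ∑ i, c i * ∑ S, h S * ∏ k, L i k ^ probeExponent S T k := by
      simp only [mul_sum]
      rw [sum_comm]
      simp only [mul_left_comm]
    _ = 0 := by simp [hpoint]
  simp [hT, Nat.factorial_ne_zero] at this

/-- the Waring rank of the monomial `x₁⋯x_N` (with `N = n+1`) is `2^{N−1}`: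
it equals `(1/(2^{N−1} N!)) ∑_{ε∈{±1}^{N−1}} (∏ε_j)(x₁ + ε₁x₂ + ⋯ + ε_{N−1}x_N)^N`, and
no decomposition into fewer `N`-th powers of linear forms exists. -/
theorem waring_rank_monomial (n : ℕ) :
    ((∏ i : Fin (n + 1), (X i : MvPolynomial (Fin (n + 1)) ℝ)) =
      C (1 / (2 ^ n * (Nat.factorial (n + 1) : ℝ))) *
        ∑ ε : Fin n → Bool,
          C (∏ j : Fin n, (if ε j then (1 : ℝ) else -1)) *
            (X 0 + ∑ j : Fin n, C (if ε j then (1 : ℝ) else -1) * X j.succ) ^ (n + 1))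
    ∧ ∀ (r : ℕ) (c : Fin r → ℝ) (L : Fin r → Fin (n + 1) → ℝ),
        ((∏ i : Fin (n + 1), (X i : MvPolynomial (Fin (n + 1)) ℝ)) =
          ∑ i : Fin r, C (c i) * (∑ k : Fin (n + 1), C (L i k) * X k) ^ (n + 1)) →
        2 ^ n ≤ r := by
  refine ⟨?_, fun r c L hf => by simpa using two_pow_le_card_of_prod_X_eq hf⟩
  rw [sum_prod_sign_mul_pow_eq_C_mul_prod_X, ← mul_assoc, ← C_mul, one_div,
    inv_mul_cancel₀ (by positivity), C_1, one_mul]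
end

section
/- For every subset S ⊆ {1,…,n} with |S| = 2l+1, there exists a unique partition (p_j) ∈ Q(n,l) such that the monomial ∏_{j∈S} x_j appears in the expansion of the product r((p_j))(x) = ∏_{j=1}^{2l+1} (Σ_{m∈R_j} x_m), where the R_j are the consecutive blocks of {1,…,n} with sizes p₁,…,p_{2l+1}. Consequently Σ_{(p_j)∈Q(n,l)} r((p_j)) = Σ_{|S|=2l+1} ∏_{j∈S} x_j. -/
open MvPolynomial

private def cum {K : ℕ} (p : Fin K → ℕ) : ℕ → ℕ :=
  fun t => ∑ m ∈ Finset.range t, (if h : m < K then p ⟨m, h⟩ else 0)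

private lemma cum_succ {K : ℕ} (p : Fin K → ℕ) {t : ℕ} (ht : t < K) :
    cum p (t + 1) = cum p t + p ⟨t, ht⟩ := by
  simp [cum, Finset.sum_range_succ, dif_pos ht]

private lemma cum_mono {K : ℕ} (p : Fin K → ℕ) : Monotone (cum p) := fun _ _ hst =>
  Finset.sum_le_sum_of_subset (Finset.range_subset_range.2 hst)

private lemma cum_top {K : ℕ} (p : Fin K → ℕ) : cum p K = ∑ j, p j := by
  rw [cum, ← Fin.sum_univ_eq_sum_range]
  exact Finset.sum_congr rfl (fun i _ => by simp [i.isLt])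

private lemma sum_filter_lt {K : ℕ} (p : Fin K → ℕ) (j : Fin K) :
    ∑ m ∈ Finset.univ.filter (· < j), p m = cum p (j : ℕ) := by
  rw [cum]
  refine Finset.sum_bij (fun m _ => (m : ℕ)) ?_ ?_ ?_ ?_
  · intro m hm
    simp only [Finset.mem_filter, Finset.mem_univ, true_and] at hm
    simp only [Finset.mem_range]
    exact hm
  · intro a _ b _ h
    exact Fin.val_injective h
  · intro t ht
    simp only [Finset.mem_range] at ht
    refine ⟨⟨t, ht.trans j.isLt⟩, ?_, rfl⟩
    rw [Finset.mem_filter]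
    exact ⟨Finset.mem_univ _, ht⟩
  · intro m _
    simp [m.isLt]

private lemma sum_filter_le {K : ℕ} (p : Fin K → ℕ) (j : Fin K) :
    ∑ m ∈ Finset.univ.filter (· ≤ j), p m = cum p ((j : ℕ) + 1) := by
  rw [cum]
  refine Finset.sum_bij (fun m _ => (m : ℕ)) ?_ ?_ ?_ ?_
  · intro m hm
    simp only [Finset.mem_filter, Finset.mem_univ, true_and] at hm
    simp only [Finset.mem_range]
    exact Nat.lt_succ_of_le hm
  · intro a _ b _ h
    exact Fin.val_injective h
  · intro t ht
    simp only [Finset.mem_range] at ht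
    have htK : t < K := by have := j.isLt; omega
    refine ⟨⟨t, htK⟩, ?_, rfl⟩
    rw [Finset.mem_filter]
    exact ⟨Finset.mem_univ _, by simp only [Fin.le_def]; omega⟩
  · intro m _
    simp [m.isLt]

/-- for every subset `S` of `{1,…,n}` with `|S| = 2l+1` there is a unique
composition `p ∈ Q(n,l)` such that the monomial `∏_{j∈S} x_j` appears in
`r(p) = ∏_j (∑_{m∈R_j} x_m)` (equivalently, `S` meets each consecutive block `R_j` in
exactly one element); consequently `∑_{p∈Q(n,l)} r(p)` equals the elementary symmetric
polynomial of degree `2l+1`. -/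
theorem chow_decomposition_elementary_symmetric (n l : ℕ)
    (Q : Set (Fin (2 * l + 1) → ℕ))
    (hQ : Q = {p | (∀ j, 1 ≤ p j) ∧ (∑ j, p j = n) ∧
        ∀ m : Fin l, p ⟨2 * (m : ℕ) + 1, by have := m.isLt; omega⟩ = 1})
    (R : (Fin (2 * l + 1) → ℕ) → Fin (2 * l + 1) → Finset (Fin n))
    (hR : ∀ p j, R p j = Finset.univ.filter (fun i : Fin n =>
        (∑ m ∈ Finset.univ.filter (· < j), p m) ≤ (i : ℕ) ∧
        (i : ℕ) < ∑ m ∈ Finset.univ.filter (· ≤ j), p m))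
    (r : (Fin (2 * l + 1) → ℕ) → MvPolynomial (Fin n) ℝ)
    (hr : ∀ p, r p = ∏ j, ∑ i ∈ R p j, X i) :
    (∀ S : Finset (Fin n), S.card = 2 * l + 1 →
      ∃! p, p ∈ Q ∧ ∀ j, (S ∩ R p j).card = 1) ∧
    (∑ᶠ p ∈ Q, r p =
      ∑ S ∈ Finset.univ.powersetCard (2 * l + 1), ∏ i ∈ S, X i) := by
  have hmem : ∀ p (j : Fin (2 * l + 1)) (i : Fin n),
      i ∈ R p j ↔ cum p (j : ℕ) ≤ (i : ℕ) ∧ (i : ℕ) < cum p ((j : ℕ) + 1) := by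
    intro p j i
    rw [hR, Finset.mem_filter, sum_filter_lt, sum_filter_le]
    simp
  have hdisj : ∀ p (j j' : Fin (2 * l + 1)) (i : Fin n),
      i ∈ R p j → i ∈ R p j' → j = j' := by
    intro p j j' i hj hj'
    rw [hmem] at hj hj'
    rcases Nat.lt_trichotomy (j : ℕ) (j' : ℕ) with h | h | h
    · have := cum_mono p (show (j : ℕ) + 1 ≤ (j' : ℕ) by omega)
      omega
    · exact Fin.ext h
    · have := cum_mono p (show (j' : ℕ) + 1 ≤ (j : ℕ) by omega)
      omega
  have key : ∀ S : Finset (Fin n), S.card = 2 * l + 1 →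
      ∃! p, p ∈ Q ∧ ∀ j, (S ∩ R p j).card = 1 := by
    intro S hS
    have hb := S.orderEmbOfFin_mem hS
    have hbmono : StrictMono (S.orderEmbOfFin hS) := (S.orderEmbOfFin hS).strictMono
    set b : Fin (2 * l + 1) → Fin n := ⇑(S.orderEmbOfFin hS) with hbdef
    set a' : ℕ → ℕ := fun t => if h : t < 2 * l + 1 then (b ⟨t, h⟩ : ℕ) else n with ha'
    have ha'mono : ∀ s t, s < t → t < 2 * l + 1 → a' s < a' t := by
      intro s t hst ht
      simp only [ha', dif_pos ht, dif_pos (hst.trans ht)]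
      exact hbmono (show (⟨s, hst.trans ht⟩ : Fin (2 * l + 1)) < ⟨t, ht⟩ from hst)
    have ha'n : ∀ t, t < 2 * l + 1 → a' t < n := by
      intro t ht
      simp only [ha', dif_pos ht]
      exact (b ⟨t, ht⟩).isLt
    have ha'b : ∀ j : Fin (2 * l + 1), a' (j : ℕ) = (b j : ℕ) := by
      intro j
      simp only [ha', dif_pos j.isLt]
    set c : ℕ → ℕ := fun t => if t = 0 then 0 else if 2 * l + 1 ≤ t then n
      else if t % 2 = 1 then a' t else a' (t - 1) + 1 with hc
    have hc0 : c 0 = 0 := rfl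
    have hcK : ∀ t, 2 * l + 1 ≤ t → c t = n := by
      intro t ht
      simp only [hc]
      rw [if_neg (by omega), if_pos ht]
    have hsand : ∀ t, t < 2 * l + 1 → c t ≤ a' t ∧ a' t < c (t + 1) := by
      intro t ht
      constructor
      · rcases Nat.eq_zero_or_pos t with rfl | htpos
        · exact Nat.zero_le _
        · simp only [hc]
          rw [if_neg (by omega), if_neg (by omega)]
          by_cases hpar : t % 2 = 1
          · rw [if_pos hpar]
          · rw [if_neg hpar]
            have := ha'mono (t - 1) t (by omega) ht
            omega
      · by_cases h1 : 2 * l + 1 ≤ t + 1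
        · rw [hcK _ h1]
          exact ha'n t ht
        · simp only [hc]
          rw [if_neg (by omega), if_neg h1]
          by_cases h2 : (t + 1) % 2 = 1
          · rw [if_pos h2]
            exact ha'mono t (t + 1) (by omega) (by omega)
          · rw [if_neg h2, Nat.add_sub_cancel]
            omega
    have hcs : ∀ t, t < 2 * l + 1 → c t < c (t + 1) := fun t ht =>
      lt_of_le_of_lt (hsand t ht).1 (hsand t ht).2
    set pS : Fin (2 * l + 1) → ℕ := fun j => c ((j : ℕ) + 1) - c (j : ℕ) with hpS
    have hcumS : ∀ t, t ≤ 2 * l + 1 → cum pS t = c t := by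
      intro t
      induction t with
      | zero => intro _; exact hc0.symm
      | succ t ih =>
        intro h
        have ht : t < 2 * l + 1 := by omega
        rw [cum_succ pS ht, ih (by omega)]
        show c t + (c (t + 1) - c t) = c (t + 1)
        have := hcs t ht
        omega
    have hpS1 : ∀ j, 1 ≤ pS j := by
      intro j
      have := hcs (j : ℕ) j.isLt
      show 1 ≤ c ((j : ℕ) + 1) - c (j : ℕ)
      omega
    have hpS2 : ∑ j, pS j = n := by
      rw [← cum_top, hcumS _ le_rfl, hcK _ le_rfl]
    have hpS3 : ∀ m : Fin l, pS ⟨2 * (m : ℕ) + 1, by have := m.isLt; omega⟩ = 1 := by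
      intro m
      have hm := m.isLt
      show c (2 * (m : ℕ) + 1 + 1) - c (2 * (m : ℕ) + 1) = 1
      have h1 : c (2 * (m : ℕ) + 1) = a' (2 * (m : ℕ) + 1) := by
        simp only [hc]
        rw [if_neg (by omega), if_neg (by omega), if_pos (by omega)]
      have heq : 2 * (m : ℕ) + 1 + 1 = 2 * (m : ℕ) + 2 := by omega
      have h2 : c (2 * (m : ℕ) + 2) = a' (2 * (m : ℕ) + 1) + 1 := by
        simp only [hc]
        rw [if_neg (by omega), if_neg (by omega), if_neg (by omega)]
        have h21 : 2 * (m : ℕ) + 2 - 1 = 2 * (m : ℕ) + 1 := by omega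
        rw [h21]
      rw [heq, h2, h1]
      omega
    have hbR : ∀ j, b j ∈ R pS j := by
      intro j
      rw [hmem]
      have h := hsand (j : ℕ) j.isLt
      rw [ha'b j] at h
      rw [hcumS _ (le_of_lt j.isLt), hcumS _ j.isLt]
      exact h
    have hblock : ∀ j : Fin (2 * l + 1), S ∩ R pS j = {b j} := by
      intro j
      ext i
      simp only [Finset.mem_inter, Finset.mem_singleton]
      constructor
      · rintro ⟨hiS, hiR⟩
        obtain ⟨j', hj'⟩ : ∃ j', b j' = i := by
          have : i ∈ Set.range b := by
            rw [hbdef, Finset.range_orderEmbOfFin]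
            exact hiS
          exact this
        have hjj : j' = j := hdisj pS j' j i (hj' ▸ hbR j') hiR
        rw [← hj', hjj]
      · rintro rfl
        exact ⟨hb j, hbR j⟩
    refine ⟨pS, ⟨by rw [hQ]; exact ⟨hpS1, hpS2, hpS3⟩,
      fun j => by rw [hblock]; exact Finset.card_singleton _⟩, ?_⟩
    rintro p ⟨hpQ, hpcard⟩
    rw [hQ] at hpQ
    obtain ⟨hp1, hp2, hp3⟩ := hpQ
    have hu : ∀ j, ∃ u : Fin n, S ∩ R p j = {u} := fun j => Finset.card_eq_one.mp (hpcard j)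
    choose u huspec using hu
    have humem : ∀ j, u j ∈ S ∧ u j ∈ R p j := by
      intro j
      have : u j ∈ S ∩ R p j := by rw [huspec j]; exact Finset.mem_singleton_self _
      exact Finset.mem_inter.mp this
    have humono : StrictMono u := by
      intro j j' hjj'
      have h1 := (hmem p j (u j)).1 (humem j).2
      have h2 := (hmem p j' (u j')).1 (humem j').2
      have hle : (j : ℕ) + 1 ≤ (j' : ℕ) := hjj'
      have := cum_mono p hle
      show (u j : ℕ) < (u j' : ℕ)
      omega
    have hub : u = b := Finset.orderEmbOfFin_unique hS (fun j => (humem j).1) humono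
    have hodd : ∀ t (ht : t < 2 * l + 1), t % 2 = 1 →
        cum p t = a' t ∧ p ⟨t, ht⟩ = 1 := by
      intro t ht hpar
      obtain ⟨m, hm⟩ : ∃ m, t = 2 * m + 1 := ⟨t / 2, by omega⟩
      have hml : m < l := by omega
      have hpt : p ⟨t, ht⟩ = 1 := by
        subst hm
        exact hp3 ⟨m, hml⟩
      refine ⟨?_, hpt⟩
      have h1 := (hmem p ⟨t, ht⟩ (u ⟨t, ht⟩)).1 (humem ⟨t, ht⟩).2
      have h2 : (u ⟨t, ht⟩ : ℕ) = a' t := by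
        rw [hub, ← ha'b ⟨t, ht⟩]
      have h3 : cum p (t + 1) = cum p t + 1 := by
        rw [cum_succ p ht, hpt]
      simp only [h2] at h1
      omega
    have hcump : ∀ t, t ≤ 2 * l + 1 → cum p t = c t := by
      intro t ht
      rcases Nat.eq_zero_or_pos t with rfl | htpos
      · exact hc0.symm
      rcases eq_or_lt_of_le ht with rfl | htK
      · rw [cum_top, hp2, hcK _ le_rfl]
      by_cases hpar : t % 2 = 1
      · rw [(hodd t htK hpar).1]
        simp only [hc]
        rw [if_neg (by omega), if_neg (by omega), if_pos hpar]
      · have h1 : t - 1 < 2 * l + 1 := by omega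
        have h2 : (t - 1) % 2 = 1 := by omega
        obtain ⟨hce, hpe⟩ := hodd (t - 1) h1 h2
        have h3 : cum p (t - 1 + 1) = cum p (t - 1) + 1 := by
          rw [cum_succ p h1, hpe]
        have ht1 : t - 1 + 1 = t := by omega
        rw [ht1] at h3
        rw [h3, hce]
        simp only [hc]
        rw [if_neg (by omega), if_neg (by omega), if_neg hpar]
    funext j
    have hj := j.isLt
    have e1 : cum p ((j : ℕ) + 1) = cum p (j : ℕ) + p j := by
      rw [cum_succ p hj]
    have e2 := hcump (j : ℕ) (le_of_lt hj)
    have e3 := hcump ((j : ℕ) + 1) hj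
    show p j = c ((j : ℕ) + 1) - c (j : ℕ)
    omega
  refine ⟨key, ?_⟩
  have hQfin : Q.Finite := by
    apply Set.Finite.subset (Set.Finite.pi (fun _ : Fin (2 * l + 1) => Set.finite_Iic n))
    intro p hp
    rw [hQ] at hp
    refine Set.mem_univ_pi.mpr (fun j => Set.mem_Iic.mpr ?_)
    exact le_trans (Finset.single_le_sum (f := p) (fun _ _ => Nat.zero_le _)
      (Finset.mem_univ j)) (le_of_eq hp.2.1)
  have hginj : ∀ (p : Fin (2 * l + 1) → ℕ) (g : Fin (2 * l + 1) → Fin n),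
      (∀ j, g j ∈ R p j) → Function.Injective g := by
    intro p g hg j j' h
    refine hdisj p j j' (g j) (hg j) ?_
    rw [h]
    exact hg j'
  have hcardim : ∀ (p : Fin (2 * l + 1) → ℕ) (g : Fin (2 * l + 1) → Fin n),
      (∀ j, g j ∈ R p j) → (Finset.image g Finset.univ).card = 2 * l + 1 := by
    intro p g hg
    rw [Finset.card_image_of_injective _ (hginj p g hg), Finset.card_univ, Fintype.card_fin]
  have hinter : ∀ (p : Fin (2 * l + 1) → ℕ) (g : Fin (2 * l + 1) → Fin n),
      (∀ j, g j ∈ R p j) → ∀ j, (Finset.image g Finset.univ) ∩ R p j = {g j} := by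
    intro p g hg j
    ext i
    simp only [Finset.mem_inter, Finset.mem_singleton, Finset.mem_image, Finset.mem_univ,
      true_and]
    constructor
    · rintro ⟨⟨j', rfl⟩, hiR⟩
      rw [hdisj p j' j (g j') (hg j') hiR]
    · rintro rfl
      exact ⟨⟨j, rfl⟩, hg j⟩
  rw [finsum_mem_eq_finite_toFinset_sum _ hQfin]
  have hstep : ∀ p, r p = ∑ g ∈ Fintype.piFinset (fun j => R p j),
      ∏ j, (X (g j) : MvPolynomial (Fin n) ℝ) := by
    intro p
    rw [hr p, Finset.prod_univ_sum]
  rw [Finset.sum_congr rfl (fun p _ => hstep p), Finset.sum_sigma']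
  refine Finset.sum_bij (fun x _ => Finset.image x.2 Finset.univ) ?_ ?_ ?_ ?_
  · rintro ⟨p, g⟩ hx
    rw [Finset.mem_sigma] at hx
    have hg : ∀ j, g j ∈ R p j := Fintype.mem_piFinset.mp hx.2
    exact Finset.mem_powersetCard_univ.mpr (hcardim p g hg)
  · rintro ⟨p1, g1⟩ hx1 ⟨p2, g2⟩ hx2 h
    have h' : Finset.image g1 Finset.univ = Finset.image g2 Finset.univ := h
    rw [Finset.mem_sigma] at hx1 hx2
    have hg1 : ∀ j, g1 j ∈ R p1 j := Fintype.mem_piFinset.mp hx1.2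
    have hg2 : ∀ j, g2 j ∈ R p2 j := Fintype.mem_piFinset.mp hx2.2
    have hq1 : p1 ∈ Q := (Set.Finite.mem_toFinset hQfin).mp hx1.1
    have hq2 : p2 ∈ Q := (Set.Finite.mem_toFinset hQfin).mp hx2.1
    have hScard : (Finset.image g1 Finset.univ).card = 2 * l + 1 := hcardim p1 g1 hg1
    have hcond1 : p1 ∈ Q ∧ ∀ j, ((Finset.image g1 Finset.univ) ∩ R p1 j).card = 1 := by
      exact ⟨hq1, fun j => by rw [hinter p1 g1 hg1 j]; exact Finset.card_singleton _⟩
    have hcond2 : p2 ∈ Q ∧ ∀ j, ((Finset.image g1 Finset.univ) ∩ R p2 j).card = 1 := by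
      refine ⟨hq2, fun j => ?_⟩
      rw [h', hinter p2 g2 hg2 j]
      exact Finset.card_singleton _
    have hpp : p1 = p2 := by
      obtain ⟨p0, _, huniq⟩ := key _ hScard
      rw [huniq p1 hcond1, huniq p2 hcond2]
    subst hpp
    have hgg : g1 = g2 := by
      funext j
      have e1 := hinter p1 g1 hg1 j
      have e2 := hinter p1 g2 hg2 j
      rw [h'] at e1
      rw [e2] at e1
      exact (Finset.singleton_injective e1.symm)
    rw [hgg]
  · intro S hSmem
    have hScard : S.card = 2 * l + 1 := Finset.mem_powersetCard_univ.mp hSmem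
    obtain ⟨p, ⟨hpQ, hpcard⟩, -⟩ := key S hScard
    have hu : ∀ j, ∃ u : Fin n, S ∩ R p j = {u} := fun j => Finset.card_eq_one.mp (hpcard j)
    choose g hg using hu
    have hgmem : ∀ j, g j ∈ S ∧ g j ∈ R p j := by
      intro j
      have : g j ∈ S ∩ R p j := by rw [hg j]; exact Finset.mem_singleton_self _
      exact Finset.mem_inter.mp this
    have hgR : ∀ j, g j ∈ R p j := fun j => (hgmem j).2
    refine ⟨⟨p, g⟩, ?_, ?_⟩
    · rw [Finset.mem_sigma]
      exact ⟨(Set.Finite.mem_toFinset hQfin).mpr hpQ, Fintype.mem_piFinset.mpr hgR⟩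
    · refine Finset.eq_of_subset_of_card_le ?_ ?_
      · intro i hi
        obtain ⟨j, -, rfl⟩ := Finset.mem_image.mp hi
        exact (hgmem j).1
      · rw [hcardim p g hgR, hScard]
  · rintro ⟨p, g⟩ hx
    rw [Finset.mem_sigma] at hx
    have hg : ∀ j, g j ∈ R p j := Fintype.mem_piFinset.mp hx.2
    exact (Finset.prod_image (fun a _ b _ hab => hginj p g hg hab)).symm
end

section
/- The Chow rank of the elementary symmetric polynomial e_{2l+1}(x₁,…,x_{n+1}) is at most binomial(n−l, l), and the Chow rank of e_{2l}(x₁,…,x_n) is at most binomial(n−l, l): each is a sum of that many products of linear forms. -/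
/-!
Write `e_d(m)` for `e_d(x₀, …, x_{m-1})`. Splitting off the two largest indices of a monomial
gives `e_{d+2}(m) = ∑_{k<m} e_d(k) · x_k · (x_{k+1} + ⋯ + x_{m-1})`,
so a decomposition of `e_{2l+1}(k)` into products of linear forms, multiplied by the two linear
forms `x_k` and `x_{k+1} + ⋯ + x_{m-1}`, contributes to one of `e_{2l+3}(m)`. Starting from the
linear form `e_1`, the number of products needed for `e_{2l+1}(n+1)` therefore obeys
`c(l+1, n+1) = ∑_{k<n} c(l, k)` (the outermost terms of the sum vanish), which the hockey-stick
identity solves as `c(l, n) = C(n-l, l)`. The even case follows from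
`e_{2l+2}(n) = ∑_{j<n} e_{2l+1}(j) · x_j`.
-/

open MvPolynomial Finset

section PrefixEsymm

variable {A : Type*} [CommSemiring A] (x : ℕ → A)

def prefixEsymm (d m : ℕ) : A :=
  ∑ S ∈ (range m).powersetCard d, ∏ i ∈ S, x i

lemma prefixEsymm_zero (m : ℕ) : prefixEsymm x 0 m = 1 := by
  simp [prefixEsymm]

lemma prefixEsymm_eq_zero_of_lt {d m : ℕ} (h : m < d) : prefixEsymm x d m = 0 := by
  rw [prefixEsymm, powersetCard_eq_empty.2 (by simpa using h), sum_empty]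

lemma prefixEsymm_succ_succ (d m : ℕ) :
    prefixEsymm x (d + 1) (m + 1) = prefixEsymm x (d + 1) m + prefixEsymm x d m * x m := by
  have hm : m ∉ range m := notMem_range_self
  rw [prefixEsymm, range_add_one, powersetCard_succ_insert hm, sum_union, sum_image,
    prefixEsymm, prefixEsymm, sum_mul]
  · refine congrArg _ (sum_congr rfl fun S hS => ?_)
    rw [prod_insert fun h => hm ((mem_powersetCard.1 hS).1 h), mul_comm]
  · intro S hS T hT hST
    rw [← erase_insert fun h => hm ((mem_powersetCard.1 hS).1 h),
      ← erase_insert fun h => hm ((mem_powersetCard.1 hT).1 h), hST]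
  · refine disjoint_left.2 fun S hS hS' => ?_
    obtain ⟨T, -, rfl⟩ := mem_image.1 hS'
    exact hm ((mem_powersetCard.1 hS).1 (mem_insert_self m T))

lemma prefixEsymm_succ (d m : ℕ) :
    prefixEsymm x (d + 1) m = ∑ j ∈ range m, prefixEsymm x d j * x j := by
  induction m with
  | zero => exact prefixEsymm_eq_zero_of_lt x (Nat.succ_pos d)
  | succ m ih => rw [prefixEsymm_succ_succ, ih, sum_range_succ]

lemma prefixEsymm_add_two (d m : ℕ) :
    prefixEsymm x (d + 2) m =
      ∑ k ∈ range m, prefixEsymm x d k * x k * ∑ i ∈ Ioo k m, x i := by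
  simp_rw [prefixEsymm_succ x (d + 1), prefixEsymm_succ x d, sum_mul, mul_sum]
  exact sum_comm' fun i k => by simp only [mem_range, mem_Ioo]; omega

lemma prefixEsymm_add_three (d n : ℕ) :
    prefixEsymm x (d + 3) (n + 2) =
      ∑ k ∈ range n, prefixEsymm x (d + 1) (k + 1) * x (k + 1) *
        ∑ i ∈ Ioo (k + 1) (n + 2), x i := by
  rw [prefixEsymm_add_two, sum_range_succ, sum_range_succ',
    prefixEsymm_eq_zero_of_lt x (Nat.succ_pos d),
    show Ioo (n + 1) (n + 2) = ∅ from (Ioo_add_one_right_eq_Ioc _ _).trans (Ioc_self _)]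
  simp

end PrefixEsymm

section SumOfProds

variable {A : Type*} [CommSemiring A] (V : Set A)

-- When `V` is the space of linear forms and `0 < d`, this says that `p` has Chow rank at most `r`.
def IsSumOfProds (r d : ℕ) (p : A) : Prop :=
  ∃ ℓ : Fin r → Fin d → A, (∀ i j, ℓ i j ∈ V) ∧ p = ∑ i, ∏ j, ℓ i j

namespace IsSumOfProds

variable {V}

lemma zero (d : ℕ) : IsSumOfProds V 0 d 0 :=
  ⟨Fin.elim0, fun i => i.elim0, by simp⟩

lemma one : IsSumOfProds V 1 0 1 :=
  ⟨fun _ => Fin.elim0, fun _ j => j.elim0, by simp⟩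

lemma add {r s d : ℕ} {p q : A} (hp : IsSumOfProds V r d p) (hq : IsSumOfProds V s d q) :
    IsSumOfProds V (r + s) d (p + q) := by
  obtain ⟨ℓ, hℓ, rfl⟩ := hp
  obtain ⟨ℓ', hℓ', rfl⟩ := hq
  refine ⟨Fin.append ℓ ℓ', Fin.addCases (by simpa using hℓ) (by simpa using hℓ'), ?_⟩
  simp [Fin.sum_univ_add]

lemma sum {ι : Type*} {s : Finset ι} {r : ι → ℕ} {d : ℕ} {p : ι → A}
    (h : ∀ k ∈ s, IsSumOfProds V (r k) d (p k)) :
    IsSumOfProds V (∑ k ∈ s, r k) d (∑ k ∈ s, p k) := by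
  classical
  induction s using Finset.induction_on with
  | empty => exact zero d
  | insert k s hk ih =>
    rw [sum_insert hk, sum_insert hk]
    exact (h k (mem_insert_self k s)).add (ih fun j hj => h j (mem_insert_of_mem hj))

lemma mul_mem {r d : ℕ} {p v : A} (hp : IsSumOfProds V r d p) (hv : v ∈ V) :
    IsSumOfProds V r (d + 1) (p * v) := by
  obtain ⟨ℓ, hℓ, rfl⟩ := hp
  refine ⟨fun i => Fin.snoc (ℓ i) v, fun i => Fin.lastCases (by simpa using hv)
    (by simpa using hℓ i), ?_⟩
  simp [Fin.prod_univ_castSucc, sum_mul]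

end IsSumOfProds

end SumOfProds

lemma Nat.sum_range_choose_sub {a b : ℕ} (h : a ≤ b) (n : ℕ) :
    ∑ k ∈ range n, (k - a).choose b = (n - a).choose (b + 1) := by
  induction n with
  | zero => simp
  | succ n ih =>
    rw [sum_range_succ, ih]
    rcases Nat.lt_or_ge n a with hn | hn
    · rw [Nat.sub_eq_zero_of_le hn.le, Nat.sub_eq_zero_of_le hn,
        Nat.choose_eq_zero_of_lt (by omega : 0 < b), add_zero]
    · rw [Nat.sub_add_comm hn, Nat.choose_succ_succ', add_comm]

section ChowRank

variable {A : Type*} [CommSemiring A] {V : AddSubmonoid A} {x : ℕ → A}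

theorem isSumOfProds_prefixEsymm_odd (hx : ∀ i, x i ∈ V) (l n : ℕ) :
    IsSumOfProds V ((n - l).choose l) (2 * l + 1) (prefixEsymm x (2 * l + 1) (n + 1)) := by
  induction l generalizing n with
  | zero =>
    simpa [prefixEsymm_succ, prefixEsymm_zero] using
      IsSumOfProds.one.mul_mem (sum_mem fun i _ => hx i)
  | succ l ih =>
    cases n with
    | zero =>
      rw [prefixEsymm_eq_zero_of_lt x (by omega)]
      simpa using IsSumOfProds.zero _
    | succ n =>
      rw [show 2 * (l + 1) + 1 = 2 * l + 3 by ring, prefixEsymm_add_three,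
        Nat.add_sub_add_right, ← Nat.sum_range_choose_sub le_rfl]
      exact IsSumOfProds.sum fun k _ =>
        ((ih k).mul_mem (hx _)).mul_mem (sum_mem fun i _ => hx i)

theorem isSumOfProds_prefixEsymm_even (hx : ∀ i, x i ∈ V) (l n : ℕ) :
    IsSumOfProds V ((n - l).choose l) (2 * l) (prefixEsymm x (2 * l) n) := by
  cases l with
  | zero => simpa [prefixEsymm_zero] using IsSumOfProds.one
  | succ l =>
    cases n with
    | zero =>
      rw [prefixEsymm_eq_zero_of_lt x (by omega)]
      simpa using IsSumOfProds.zero _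
    | succ n =>
      rw [show 2 * (l + 1) = 2 * l + 1 + 1 by ring, prefixEsymm_succ, sum_range_succ',
        prefixEsymm_eq_zero_of_lt x (by omega : 0 < 2 * l + 1), zero_mul, add_zero,
        Nat.add_sub_add_right, ← Nat.sum_range_choose_sub le_rfl]
      exact IsSumOfProds.sum fun k _ => (isSumOfProds_prefixEsymm_odd hx l k).mul_mem (hx _)

end ChowRank

section LinearForms

variable (R : Type*) [CommSemiring R]

noncomputable def finVars (M i : ℕ) : MvPolynomial (Fin M) R :=
  if h : i < M then X ⟨i, h⟩ else 0

lemma finVars_mem_span (M i : ℕ) :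
    finVars R M i ∈ (Submodule.span R (Set.range X)).toAddSubmonoid := by
  unfold finVars
  split_ifs
  · exact Submodule.subset_span (Set.mem_range_self _)
  · exact zero_mem _

variable {R}

lemma prefixEsymm_finVars (M d : ℕ) : prefixEsymm (finVars R M) d M = esymm (Fin M) R d := by
  rw [prefixEsymm, esymm, ← Nat.Iio_eq_range, ← Fin.map_valEmbedding_univ, powersetCard_map,
    sum_map]
  refine sum_congr rfl fun S _ => ?_
  simp [prod_map, finVars]

lemma exists_linearForms_of_isSumOfProds {σ : Type*} [Fintype σ] {r d : ℕ}
    {p : MvPolynomial σ R}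
    (h : IsSumOfProds (Submodule.span R (Set.range (X : σ → MvPolynomial σ R)) : Set _) r d p) :
    ∃ L : Fin r → Fin d → σ → R, p = ∑ i, ∏ j, ∑ k, C (L i j k) * X k := by
  obtain ⟨ℓ, hℓ, rfl⟩ := h
  choose L hL using fun i j => (Submodule.mem_span_range_iff_exists_fun R).1 (hℓ i j)
  exact ⟨L, by simp_rw [← smul_eq_C_mul, hL]⟩

end LinearForms

/-- the Chow rank of `e_{2l+1}(x₁,…,x_{n+1})` is at most `C(n−l, l)`, and the
Chow rank of `e_{2l}(x₁,…,x_n)` is at most `C(n−l, l)`: each is a sum of that many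
products of linear forms. -/
theorem chow_rank_elementary_symmetric_le (n l : ℕ) :
    (∃ L : Fin (Nat.choose (n - l) l) → Fin (2 * l + 1) → Fin (n + 1) → ℝ,
      (∑ S ∈ Finset.univ.powersetCard (2 * l + 1), ∏ i ∈ S,
          (X i : MvPolynomial (Fin (n + 1)) ℝ)) =
        ∑ i, ∏ j, (∑ k, C (L i j k) * X k)) ∧
    (∃ L : Fin (Nat.choose (n - l) l) → Fin (2 * l) → Fin n → ℝ,
      (∑ S ∈ Finset.univ.powersetCard (2 * l), ∏ i ∈ S,
          (X i : MvPolynomial (Fin n) ℝ)) =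
        ∑ i, ∏ j, (∑ k, C (L i j k) * X k)) := by
  have hodd := isSumOfProds_prefixEsymm_odd (finVars_mem_span ℝ (n + 1)) l n
  have heven := isSumOfProds_prefixEsymm_even (finVars_mem_span ℝ n) l n
  rw [prefixEsymm_finVars] at hodd heven
  exact ⟨exists_linearForms_of_isSumOfProds hodd, exists_linearForms_of_isSumOfProds heven⟩
end
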